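/- Let 𝖢 be a colimit type compatible with a class of limits Ψ and let A be a category whose opposite A^op is Ψ-complete. Then every object F of 𝖢A (the closure of the representables in small presheaves on A under 𝖢-colimits) is a small presheaf which, viewed as a functor A^op → Set, preserves Ψ-limits. -/

import Mathlib

set_option linter.unusedVariables false

open CategoryTheory CategoryTheory.Limits Opposite

universe w w' v v' u

namespace Paper

/-! ### Weighted (co)limits in the `Set`-enriched case -/

/-- The canonical diagram whose conical colimit computes the `M`-weighted colimit of `H`. -/
abbrev elemDiagram {C : Type u} [SmallCategory C] (M : Cᵒᵖ ⥤ Type u)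
    {A : Type w} [Category.{v} A] (H : C ⥤ A) : M.Elementsᵒᵖ ⥤ A :=
  (CategoryOfElements.π M).leftOp ⋙ H

/-- The `M`-weighted colimit of `H`. -/
noncomputable abbrev wcolim {C : Type u} [SmallCategory C] (M : Cᵒᵖ ⥤ Type u)
    {A : Type w} [Category.{v} A] (H : C ⥤ A) [HasColimit (elemDiagram M H)] : A :=
  colimit (elemDiagram M H)

/-- The functor `M ⋆ (−) : [C, Set] ⥤ Set`. -/
noncomputable def wcolimF {C : Type u} [SmallCategory C] (M : Cᵒᵖ ⥤ Type u) :
    (C ⥤ Type u) ⥤ Type u :=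
  (Functor.whiskeringLeft _ _ _).obj (CategoryOfElements.π M).leftOp ⋙ colim

/-- The functor `(−) ⋆ F : [Bᵒᵖ, Set] ⥤ Set` for a covariant weight `F : B ⥤ Set`. -/
noncomputable def costarF {B : Type u} [SmallCategory B] (F : B ⥤ Type u) :
    (Bᵒᵖ ⥤ Type u) ⥤ Type u :=
  wcolimF (C := Bᵒᵖ) (unopUnop B ⋙ F)

/-! ### Cardinal-indexed smallness, filteredness, flatness, accessibility -/

/-- A small category `D` is `α`-small if it has fewer than `α` arrows. -/
def AlphaSmall (α : Cardinal.{u}) (D : Type u) [SmallCategory D] : Prop :=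
  Cardinal.mk (Arrow D) < α

/-- `α`-filteredness: every `α`-small diagram admits a cocone. -/
def IsAlphaFiltered (α : Cardinal.{u}) (D : Type w) [Category.{v} D] : Prop :=
  ∀ (S : Type u) [iS : SmallCategory S], AlphaSmall α S → ∀ F : S ⥤ D, Nonempty (Cocone F)

/-- `F : B ⥤ Set` is `α`-flat if `(−) ⋆ F` preserves `α`-small limits. -/
def AlphaFlat (α : Cardinal.{u}) {B : Type u} [SmallCategory B] (F : B ⥤ Type u) : Prop :=
  ∀ (D : Type u) [iD : SmallCategory D], AlphaSmall α D →
    PreservesLimitsOfShape D (costarF F)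

/-- An object `X` is `α`-presentable if its hom-functor preserves `α`-filtered colimits. -/
def AlphaPresentable (α : Cardinal.{u}) {A : Type w} [Category.{v} A] (X : A) : Prop :=
  ∀ (D : Type u) [iD : SmallCategory D], IsAlphaFiltered α D →
    PreservesColimitsOfShape D (coyoneda.obj (op X))

/-- A category is `α`-accessible if it has `α`-filtered (= `α`-flat) colimits and is
equivalent to the category of `α`-flat set-valued functors on some small category. -/
def AlphaAccessible (α : Cardinal.{u}) (A : Type w) [Category.{v} A] : Prop :=
  (∀ (D : Type u) [iD : SmallCategory D], IsAlphaFiltered α D → HasColimitsOfShape D A) ∧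
  ∃ B : Cat.{u, u}, Nonempty (A ≌ ObjectProperty.FullSubcategory (fun F : B ⥤ Type u => AlphaFlat α F))

/-- A functor preserves `α`-flat colimits (in the ordinary case, `α`-filtered colimits). -/
def PreservesAlphaFlatColimits (α : Cardinal.{u}) {A : Type w} [Category.{v} A]
    {K : Type w'} [Category.{v'} K] (F : A ⥤ K) : Prop :=
  ∀ (D : Type u) [iD : SmallCategory D], IsAlphaFiltered α D →
    PreservesColimitsOfShape D F

/-- A functor is `α`-continuous: it preserves `α`-small limits. -/
def AlphaContinuous (α : Cardinal.{u}) {A : Type w} [Category.{v} A]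
    {K : Type w'} [Category.{v'} K] (F : A ⥤ K) : Prop :=
  ∀ (D : Type u) [iD : SmallCategory D], AlphaSmall α D → PreservesLimitsOfShape D F

/-! ### Classes of limits -/

/-- A class of limit shapes. -/
def ShapeClass : Type (u + 1) :=
  ∀ (D : Type u), SmallCategory D → Prop

/-- A category has `Ψ`-limits. -/
def PsiComplete (Psi : ShapeClass.{u}) (A : Type w) [Category.{v} A] : Prop :=
  ∀ (D : Type u) [iD : SmallCategory D], Psi D iD → HasLimitsOfShape D A

/-- A functor is `Ψ`-continuous. -/
def PsiContinuous (Psi : ShapeClass.{u}) {A : Type w} [Category.{v} A]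
    {K : Type w'} [Category.{v'} K] (F : A ⥤ K) : Prop :=
  ∀ (D : Type u) [iD : SmallCategory D], Psi D iD → PreservesLimitsOfShape D F

/-! ### Colimit types -/

/-- A colimit type assigns to each weight a replete full subcategory of diagrams. -/
def ColimitType : Type (u + 1) :=
  ∀ (C : Type u) (iC : SmallCategory C), (Cᵒᵖ ⥤ Type u) → Set (C ⥤ Type u)

/-- `(M, H)` is a diagram of type `𝖢` in the functor category `[B, Set]`. -/
def IsCDiagram (Ct : ColimitType.{u}) {C : Type u} [iC : SmallCategory C]
    (M : Cᵒᵖ ⥤ Type u) {B : Type w} [Category.{u} B] (H : C ⥤ (B ⥤ Type u)) : Prop :=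
  ∀ b : B, H ⋙ (evaluation B (Type u)).obj b ∈ Ct C iC M

/-- A subcategory of a functor category is closed under colimits of type `𝖢`. -/
def ClosedUnderC (Ct : ColimitType.{u}) {B : Type w} [Category.{u} B]
    (S : Set (B ⥤ Type u)) : Prop :=
  ∀ (C : Type u) [iC : SmallCategory C] (M : Cᵒᵖ ⥤ Type u) (H : C ⥤ (B ⥤ Type u)),
    IsCDiagram Ct M H → (∀ c : C, H.obj c ∈ S) → wcolim M H ∈ S

/-- The closure of a family of generators under colimits of type `𝖢` (and isomorphisms). -/
def CClosureIn (Ct : ColimitType.{u}) {B : Type w} [Category.{u} B]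
    (gens : Set (B ⥤ Type u)) : Set (B ⥤ Type u) :=
  ⋂₀ {S | gens ⊆ S ∧ (∀ X Y : B ⥤ Type u, Nonempty (X ≅ Y) → X ∈ S → Y ∈ S) ∧
      ClosedUnderC Ct S}

/-- `𝖢A`: the closure of the representables under `𝖢`-colimits inside presheaves on `A`. -/
def CClosure (Ct : ColimitType.{u}) (A : Type w) [Category.{u} A] :
    Set (Aᵒᵖ ⥤ Type u) :=
  CClosureIn Ct {X | ∃ a : A, Nonempty (X ≅ yoneda.obj a)}

/-- `𝖢(Aᵒᵖ)`: the closure of the corepresentables under `𝖢`-colimits in `[A, Set]`. -/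
def CoCClosure (Ct : ColimitType.{u}) (A : Type w) [Category.{u} A] :
    Set (A ⥤ Type u) :=
  CClosureIn Ct {X | ∃ a : A, Nonempty (X ≅ coyoneda.obj (op a))}

/-- The one-step completion `𝖢₁B` of `B` under `𝖢`-colimits of representables. -/
def COneStep (Ct : ColimitType.{u}) (B : Type w) [Category.{u} B] :
    Set (Bᵒᵖ ⥤ Type u) :=
  {X | (∃ b : B, Nonempty (X ≅ yoneda.obj b)) ∨
    ∃ (C : Cat.{u, u}) (M : (↑C)ᵒᵖ ⥤ Type u) (H : ↑C ⥤ (Bᵒᵖ ⥤ Type u)),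
      IsCDiagram Ct M H ∧ (∀ c : ↑C, ∃ b : B, Nonempty (H.obj c ≅ yoneda.obj b)) ∧
      Nonempty (X ≅ wcolim M H)}

/-- The category `𝖢B`. -/
abbrev CCat (Ct : ColimitType.{u}) (B : Type w) [Category.{u} B] :=
  ObjectProperty.FullSubcategory (fun X => X ∈ CClosure Ct B)

/-- The inclusion `B ⥤ 𝖢B` (corestricted Yoneda). -/
def yonedaC (Ct : ColimitType.{u}) (B : Type w) [Category.{u} B] : B ⥤ CCat Ct B :=
  ObjectProperty.lift _ yoneda (fun b S hS => hS.1 ⟨b, ⟨Iso.refl _⟩⟩)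

/-- Compatibility of a colimit type with a class of limits. -/
def Compatible (Psi : ShapeClass.{u}) (Ct : ColimitType.{u}) : Prop :=
  ∀ (C : Type u) [iC : SmallCategory C] (M : Cᵒᵖ ⥤ Type u), (Ct C iC M).Nonempty →
    ∀ (D : Type u) [iD : SmallCategory D], Psi D iD →
      ∀ S : D ⥤ (C ⥤ Type u), (∀ d : D, S.obj d ∈ Ct C iC M) →
        limit S ∈ Ct C iC M ∧
        Nonempty (IsLimit ((wcolimF M).mapCone (limit.cone S)))

/-- Condition (a): each `𝖢_M` is closed under `α`-flat (= `α`-filtered) colimits. -/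
def ConditionA (α : Cardinal.{u}) (Ct : ColimitType.{u}) : Prop :=
  ∀ (C : Type u) [iC : SmallCategory C] (M : Cᵒᵖ ⥤ Type u)
    (D : Type u) [iD : SmallCategory D], IsAlphaFiltered α D →
    ∀ H : D ⥤ (C ⥤ Type u), (∀ d : D, H.obj d ∈ Ct C iC M) →
      colimit H ∈ Ct C iC M

/-- `A(H−, a)` for `H : Cᵒᵖ ⥤ A`, as a covariant functor `C ⥤ Set`. -/
def homDiagram {C : Type u} [SmallCategory C] {A : Type w} [Category.{u} A]
    (H : Cᵒᵖ ⥤ A) (a : A) : C ⥤ Type u :=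
  H.rightOp ⋙ yoneda.obj a

/-- Condition (b): every `Ψ`-continuous `α`-flat-colimit-preserving functor from an
`α`-accessible category with `Ψ`-limits to `Set` is a `𝖢`-colimit of representables
at `α`-presentable objects. -/
def ConditionB (α : Cardinal.{u}) (Psi : ShapeClass.{u}) (Ct : ColimitType.{u}) : Prop :=
  ∀ (A : Type (u + 1)) [iA : Category.{u} A], AlphaAccessible α A → PsiComplete Psi A →
    ∀ F : A ⥤ Type u, PsiContinuous Psi F → PreservesAlphaFlatColimits α F →
      ∃ (C : Type u) (iC : SmallCategory C) (M : Cᵒᵖ ⥤ Type u) (H : Cᵒᵖ ⥤ A),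
        (∀ c : Cᵒᵖ, AlphaPresentable α (H.obj c)) ∧
        (∀ a : A, homDiagram H a ∈ Ct C iC M) ∧
        Nonempty (F ≅ wcolim M (H.rightOp ⋙ coyoneda))

/-! ### 𝖢-virtual limits -/

/-- The presheaf `{M, Y∘H} = [C,Set](M, B(−, H−))`. -/
@[simps] def virtLim {C : Type u} [SmallCategory C] {B : Type w} [Category.{u} B]
    (M : C ⥤ Type u) (H : C ⥤ B) : Bᵒᵖ ⥤ Type u where
  obj b := M ⟶ H ⋙ coyoneda.obj (op b.unop)
  map {b b'} f := TypeCat.ofHom (fun τ => τ ≫ Functor.whiskerLeft H (coyoneda.map f.unop.op))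

/-- An `α`-small covariant weight. -/
def AlphaSmallWeight (α : Cardinal.{u}) {C : Type u} [SmallCategory C]
    (M : C ⥤ Type u) : Prop :=
  Cardinal.mk (Arrow C) < α ∧ ∀ c : C, Cardinal.mk (M.obj c) < α

/-- `B` is `𝖢`-virtually `α`-complete. -/
def CVirtuallyAlphaComplete (Ct : ColimitType.{u}) (α : Cardinal.{u})
    (B : Type w) [Category.{u} B] : Prop :=
  ∀ (C : Type u) [iC : SmallCategory C] (M : C ⥤ Type u) (H : C ⥤ B),
    AlphaSmallWeight α M → virtLim M H ∈ CClosure Ct B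

/-- `F : B ⥤ Set` is `𝖢`-virtually `α`-continuous. -/
def CVirtuallyAlphaContinuous (Ct : ColimitType.{u}) (α : Cardinal.{u})
    {B : Type u} [SmallCategory B] (F : B ⥤ Type u) : Prop :=
  ∀ (C : Type u) [iC : SmallCategory C] (M : C ⥤ Type u) (H : C ⥤ B),
    AlphaSmallWeight α M → virtLim M H ∈ CClosure Ct B →
      Nonempty ((costarF F).obj (virtLim M H) ≃ (M ⟶ H ⋙ F))

/-! ### Diagrams of type 𝖢 in `𝖢B`, 𝖢-cocontinuity, 𝖢-presentability -/

/-- A diagram of type `𝖢` in the category `𝖢B`. -/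
def IsCDiagramC (Ct : ColimitType.{u}) {C : Type u} [iC : SmallCategory C]
    (M : Cᵒᵖ ⥤ Type u) {B : Type w} [Category.{u} B] (H : C ⥤ CCat Ct B) : Prop :=
  IsCDiagram Ct M (H ⋙ ObjectProperty.ι _)

/-- A set-valued functor on `𝖢B` is `𝖢`-cocontinuous: it preserves diagrams of type `𝖢`
as well as their colimits. -/
def CCocontinuousTo (Ct : ColimitType.{u}) {B : Type w} [Category.{u} B]
    (F : CCat Ct B ⥤ Type u) : Prop :=
  ∀ (C : Type u) [iC : SmallCategory C] (M : Cᵒᵖ ⥤ Type u) (H : C ⥤ CCat Ct B),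
    IsCDiagramC Ct M H →
      (H ⋙ F) ∈ Ct C iC M ∧
      ∀ c : Cocone (elemDiagram M H), IsColimit c → Nonempty (IsColimit (F.mapCocone c))

/-- A set-valued functor on `𝖢B` preserves colimits of type `𝖢`
(but not necessarily the diagrams themselves). -/
def CColimPreserving (Ct : ColimitType.{u}) {B : Type w} [Category.{u} B]
    (F : CCat Ct B ⥤ Type u) : Prop :=
  ∀ (C : Type u) [iC : SmallCategory C] (M : Cᵒᵖ ⥤ Type u) (H : C ⥤ CCat Ct B),
    IsCDiagramC Ct M H →
      ∀ c : Cocone (elemDiagram M H), IsColimit c → Nonempty (IsColimit (F.mapCocone c))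

/-! ### Regularity, pseudo equivalence relations, exactness -/

/-- A regular projective object. -/
def RegProjective {E : Type w} [Category.{v} E] (P : E) : Prop :=
  ∀ ⦃X Y : E⦄ (e : X ⟶ Y), Nonempty (RegularEpi e) → ∀ g : P ⟶ Y, ∃ f : P ⟶ X, f ≫ e = g

/-- A pseudo equivalence relation: a pair factoring as a regular epi followed by the
kernel pair of a regular epi. -/
def IsPseudoEqRel {E : Type w} [Category.{v} E] {R P : E} (f g : R ⟶ P) : Prop :=
  ∃ (S : E) (q : R ⟶ S) (h k : S ⟶ P), Nonempty (RegularEpi q) ∧ f = q ≫ h ∧ g = q ≫ k ∧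
    ∃ (Z : E) (m : P ⟶ Z), Nonempty (RegularEpi m) ∧ IsKernelPair m h k

/-- `𝖱`-presentable objects: the hom-functor preserves coequalizers of
pseudo equivalence relations. -/
def RPresentable {E : Type w} [Category.{v} E] (X : E) : Prop :=
  ∀ {R P : E} (f g : R ⟶ P), IsPseudoEqRel f g →
    PreservesColimit (parallelPair f g) (coyoneda.obj (op X))

/-- Enough regular projectives. -/
def EnoughRegProjectives (E : Type w) [Category.{v} E] : Prop :=
  ∀ X : E, ∃ (P : E) (p : P ⟶ X), RegProjective P ∧ Nonempty (RegularEpi p)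

/-- An equivalence relation: a jointly monic, reflexive, symmetric, transitive pair. -/
def IsEquivRelPair {E : Type w} [Category.{v} E] [HasFiniteLimits E]
    {R X : E} (f g : R ⟶ X) : Prop :=
  Mono (prod.lift f g) ∧
  (∃ r : X ⟶ R, r ≫ f = 𝟙 X ∧ r ≫ g = 𝟙 X) ∧
  (∃ s : R ⟶ R, s ≫ f = g ∧ s ≫ g = f) ∧
  (∃ t : pullback g f ⟶ R,
    t ≫ f = pullback.fst g f ≫ f ∧ t ≫ g = pullback.snd g f ≫ g)

/-- Barr-exactness (for a finitely complete category with coequalizers of kernel pairs):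
regular epis are stable under pullback and every equivalence relation is a kernel pair. -/
def BarrExact (E : Type w) [Category.{v} E] [HasFiniteLimits E] : Prop :=
  (∀ {X Y Z : E} (e : X ⟶ Y) (g : Z ⟶ Y), Nonempty (RegularEpi e) →
    Nonempty (RegularEpi (pullback.snd e g))) ∧
  (∀ {R X : E} (f g : R ⟶ X), IsEquivRelPair f g →
    ∃ (Z : E) (m : X ⟶ Z), IsKernelPair m f g)

/-- The closure of the representables under coequalizers of pseudo equivalence relations. -/
def RClosure (B : Type w) [Category.{u} B] : Set (Bᵒᵖ ⥤ Type u) :=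
  ⋂₀ {S | (∀ b : B, yoneda.obj b ∈ S) ∧
    (∀ X Y : Bᵒᵖ ⥤ Type u, Nonempty (X ≅ Y) → X ∈ S → Y ∈ S) ∧
    ∀ (R P : Bᵒᵖ ⥤ Type u) (f g : R ⟶ P), IsPseudoEqRel f g → R ∈ S → P ∈ S →
      colimit (parallelPair f g) ∈ S}

/-- The restricted Yoneda embedding into presheaves on the regular projectives. -/
def restrictedYoneda (E : Type u) [SmallCategory E] :
    E ⥤ ((ObjectProperty.FullSubcategory (RegProjective (E := E)))ᵒᵖ ⥤ Type u) :=
  yoneda ⋙ (Functor.whiskeringLeft _ _ _).obj (ObjectProperty.ι _).op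

/-! ### Free groupoid actions -/

/-- The equalizer of `f` and `g` exists and is an initial object. -/
def HasInitialEqualizer {E : Type w} [Category.{v} E] {X Y : E} (f g : X ⟶ Y) : Prop :=
  ∃ c : Fork f g, Nonempty (IsLimit c) ∧ Nonempty (IsInitial c.pt)

/-- A free groupoid action. -/
def FreeAction {G : Type w} [Groupoid.{v} G] {E : Type w'} [Category.{v'} E]
    (H : G ⥤ E) : Prop :=
  ∀ ⦃x y : G⦄ (g h : x ⟶ y), g ≠ h → HasInitialEqualizer (H.map g) (H.map h)

/-- A weakly-free groupoid action. -/
def WeaklyFreeAction {G : Type w} [Groupoid.{v} G] {E : Type w'} [Category.{v'} E]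
    (H : G ⥤ E) : Prop :=
  ∀ ⦃x y : G⦄ (g h : x ⟶ y), H.map g ≠ H.map h → HasInitialEqualizer (H.map g) (H.map h)

/-- A weakly-free action by `ℤ`: an automorphism all of whose non-identity powers
are fixed-point-free. -/
def WeaklyFreeAut {E : Type w} [Category.{v} E] {X : E} (f : Aut X) : Prop :=
  ∀ n : ℤ, (f ^ n).hom ≠ 𝟙 X → HasInitialEqualizer (f ^ n).hom (𝟙 X)

/-! ### Topos-theoretic notions -/

/-- Lex cocontinuous functors. -/
def LexCocontPred {A : Type w} [Category.{v} A] {K : Type w'} [Category.{v'} K]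
    (F : A ⥤ K) : Prop :=
  PreservesFiniteLimits F ∧
  ∀ (D : Type u) [iD : SmallCategory D], PreservesColimitsOfShape D F

/-- Finitary functors: those preserving (small) filtered colimits. -/
def FinitaryPred {A : Type w} [Category.{v} A] {K : Type w'} [Category.{v'} K]
    (F : A ⥤ K) : Prop :=
  ∀ (D : Type u) [iD : SmallCategory D] [IsFiltered D], PreservesColimitsOfShape D F

/-- Possessing all small filtered colimits. -/
def HasFilteredColimitsP (A : Type w) [Category.{v} A] : Prop :=
  ∀ (D : Type u) [iD : SmallCategory D] [IsFiltered D], HasColimitsOfShape D A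

/-- A left exact localization of a presheaf category. -/
def IsLexLocalization (X : Type w) [Category.{v} X] : Prop :=
  ∃ (C : Cat.{u, u}) (J : X ⥤ ((↑C)ᵒᵖ ⥤ Type u)) (L : ((↑C)ᵒᵖ ⥤ Type u) ⥤ X),
    Nonempty (L ⊣ J) ∧ J.Full ∧ J.Faithful ∧ PreservesFiniteLimits L

/-- A Grothendieck topos: an accessible left exact localization of a presheaf category. -/
def IsGrothendieckTopos (X : Type w) [Category.{v} X] : Prop :=
  ∃ (C : Cat.{u, u}) (J : X ⥤ ((↑C)ᵒᵖ ⥤ Type u)) (L : ((↑C)ᵒᵖ ⥤ Type u) ⥤ X),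
    Nonempty (L ⊣ J) ∧ J.Full ∧ J.Faithful ∧ PreservesFiniteLimits L ∧
    ∃ κ : Cardinal.{u}, PreservesAlphaFlatColimits κ J

/-! Representables are Ψ-continuous, and Ψ-continuity is invariant under isomorphism. It is
also stable under 𝖢-colimits: a weighted colimit of presheaves is computed pointwise, so
`(M ⋆ H)(−) ≅ M ⋆ H(−)`, and a Ψ-limit in `Aᵒᵖ` is sent by `H(−)` to a Ψ-limit of diagrams
in `𝖢_M`, which `M ⋆ (−)` preserves by compatibility. -/
theorem cClosureIn_subset (Ct : ColimitType.{u}) {B : Type w} [Category.{u} B]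
    {gens S : Set (B ⥤ Type u)} (hgens : gens ⊆ S)
    (hiso : ∀ X Y : B ⥤ Type u, Nonempty (X ≅ Y) → X ∈ S → Y ∈ S) (hS : ClosedUnderC Ct S) :
    CClosureIn Ct gens ⊆ S :=
  Set.sInter_subset_of_mem ⟨hgens, hiso, hS⟩

section PsiContinuous

variable {Psi : ShapeClass.{u}} {B : Type w} [Category.{v} B] {K : Type w'} [Category.{v'} K]

theorem PsiContinuous.of_iso {F G : B ⥤ K} (hF : PsiContinuous Psi F) (e : F ≅ G) :
    PsiContinuous Psi G := fun D _ hD =>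
  have := hF D hD
  preservesLimitsOfShape_of_natIso e

theorem psiContinuous_of_isEmpty [IsEmpty B] (F : B ⥤ K) : PsiContinuous Psi F :=
  fun _ _ _ => ⟨fun {_} => ⟨fun {c} _ => isEmptyElim c.pt⟩⟩

theorem psiContinuous_yoneda_obj (b : B) : PsiContinuous Psi (yoneda.obj b) :=
  fun _ _ _ => inferInstance

end PsiContinuous

theorem preservesLimit_flip {C : Type*} [Category* C] {D : Type*} [Category* D]
    {E : Type*} [Category* E] {J : Type*} [Category* J] (H : C ⥤ D ⥤ E) (G : J ⥤ D)
    (hH : ∀ c : C, PreservesLimit G (H.obj c)) : PreservesLimit G H.flip :=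
  preservesLimit_of_evaluation _ G fun c =>
    have := hH c
    preservesLimit_of_natIso G (flipCompEvaluation H c).symm

noncomputable def wcolimIsoFlipCompWcolimF {C : Type u} [SmallCategory C] (M : Cᵒᵖ ⥤ Type u)
    {B : Type w} [Category.{v} B] (H : C ⥤ B ⥤ Type u) :
    wcolim M H ≅ H.flip ⋙ wcolimF M :=
  colimitIsoFlipCompColim (elemDiagram M H)

theorem psiContinuous_wcolim {Psi : ShapeClass.{u}} {Ct : ColimitType.{u}}
    (hcomp : Compatible Psi Ct) {C : Type u} [iC : SmallCategory C] {M : Cᵒᵖ ⥤ Type u}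
    {B : Type w} [Category.{u} B] {H : C ⥤ B ⥤ Type u} (hdiag : IsCDiagram Ct M H)
    (hobj : ∀ c : C, PsiContinuous Psi (H.obj c)) : PsiContinuous Psi (wcolim M H) := by
  intro D _ hD
  -- compatibility only speaks about nonempty `𝖢_M`, and a point of `B` puts `H(b)` in `𝖢_M`
  rcases isEmpty_or_nonempty B with _ | ⟨⟨b⟩⟩
  · exact psiContinuous_of_isEmpty _ D hD
  have hM : (Ct C iC M).Nonempty := ⟨_, hdiag b⟩
  refine ⟨fun {G} => ?_⟩
  have : PreservesLimit G H.flip := preservesLimit_flip H G fun c => (hobj c D hD).preservesLimit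
  obtain ⟨-, ⟨hlim⟩⟩ := hcomp C M hM D hD (G ⋙ H.flip) fun d => hdiag (G.obj d)
  have : PreservesLimit (G ⋙ H.flip) (wcolimF M) :=
    preservesLimit_of_preserves_limit_cone (limit.isLimit _) hlim
  exact preservesLimit_of_natIso G (wcolimIsoFlipCompWcolimF M H).symm

theorem statement1_general (Psi : ShapeClass.{u}) (Ct : ColimitType.{u})
    (hcomp : Compatible Psi Ct) (A : Type u) [SmallCategory A] :
    ∀ X ∈ CClosure Ct A, PsiContinuous Psi X := by
  refine cClosureIn_subset Ct (S := {Y | PsiContinuous Psi Y}) ?_ ?_ ?_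
  · rintro Y ⟨a, ⟨e⟩⟩
    exact (psiContinuous_yoneda_obj a).of_iso e.symm
  · rintro Y Z ⟨e⟩ hY
    exact hY.of_iso e
  · intro C _ M H hdiag hobj
    exact psiContinuous_wcolim hcomp hdiag hobj

/-- if `𝖢` is compatible with `Ψ` and `Aᵒᵖ` is `Ψ`-complete, then every
object of `𝖢A` is a (small) presheaf `Aᵒᵖ ⥤ Set` preserving `Ψ`-limits. -/
theorem statement1 (Psi : ShapeClass.{u}) (Ct : ColimitType.{u})
    (hcomp : Compatible Psi Ct) (A : Type u) [SmallCategory A]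
    (hcompl : PsiComplete Psi Aᵒᵖ) :
    ∀ X ∈ CClosure Ct A, PsiContinuous Psi X :=
  statement1_general Psi Ct hcomp A

end Paper
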